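/- arXiv:2603.01627 — 4 statements merged into one kernel-verified Lean document; each statement's English description precedes it below -/
import Mathlib

section
/- Let Δ_1,…,Δ_n be real numbers with Δ_i ≥ 1 for all i, and let b_1,…,b_n, c_1,…,c_n be nonnegative real numbers. Suppose there is at least one index i with c_i ≠ 0, and let i_0 be the smallest such index. Then ∑_{i=1}^n b_i·log Δ_i ≥ (min_{i_0 ≤ j ≤ n} (∑_{i=1}^j b_i)/(∑_{i=1}^j c_i)) · ∑_{i=1}^n c_i·log Δ_i, provided that Δ_1 ≥ Δ_2 ≥ … ≥ Δ_n. -/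
open Finset


private def ext' {n : ℕ} (f : Fin n → ℝ) : ℕ → ℝ := fun k => if h : k < n then f ⟨k, h⟩ else 0

private lemma sum_Iic_ext {n : ℕ} (f : Fin n → ℝ) (j : Fin n) :
    ∑ i ∈ Finset.Iic j, f i = ∑ k ∈ Finset.range (j.val + 1), ext' f k := by
  have h1 : Finset.range (j.val + 1) = Finset.Iic (j.val) := by
    ext k; simp [Nat.lt_succ_iff]
  rw [h1, ← Fin.map_valEmbedding_Iic, Finset.sum_map]
  refine Finset.sum_congr rfl fun i _ => ?_
  simp [ext', i.isLt]

private lemma sum_univ_ext {n : ℕ} (f : Fin n → ℝ) :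
    ∑ i, f i = ∑ k ∈ Finset.range n, ext' f k := by
  rw [← Fin.sum_univ_eq_sum_range]
  refine Finset.sum_congr rfl fun i _ => ?_
  simp [ext', i.isLt]

/-- Weighted Chebyshev-type filtration inequality (Lemma 3.1 of Huang–Levin):
if `Δ₁ ≥ … ≥ Δₙ ≥ 1`, `b, c ≥ 0`, and `i₀` is the least index with `c i₀ ≠ 0`, then
`∑ bᵢ log Δᵢ ≥ (min_{i₀ ≤ j} (∑_{i ≤ j} bᵢ)/(∑_{i ≤ j} cᵢ)) · ∑ cᵢ log Δᵢ`. -/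
theorem weighted_filtration_inequality {n : ℕ} (Δ b c : Fin n → ℝ)
    (hΔ1 : ∀ i, 1 ≤ Δ i) (hΔmono : ∀ i j : Fin n, i ≤ j → Δ j ≤ Δ i)
    (hb : ∀ i, 0 ≤ b i) (hc : ∀ i, 0 ≤ c i)
    (i0 : Fin n) (hi0 : c i0 ≠ 0) (hi0min : ∀ i, c i ≠ 0 → i0 ≤ i) :
    ∑ i, b i * Real.log (Δ i) ≥
      ((Finset.Ici i0).inf' ⟨i0, Finset.mem_Ici.mpr le_rfl⟩
          (fun j => (∑ i ∈ Finset.Iic j, b i) / (∑ i ∈ Finset.Iic j, c i))) *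
        ∑ i, c i * Real.log (Δ i) := by
  set m := (Finset.Ici i0).inf' ⟨i0, Finset.mem_Ici.mpr le_rfl⟩
      (fun j => (∑ i ∈ Finset.Iic j, b i) / (∑ i ∈ Finset.Iic j, c i)) with hm
  -- positivity of denominators for j ≥ i0
  have hCpos : ∀ j : Fin n, i0 ≤ j → 0 < ∑ i ∈ Finset.Iic j, c i := by
    intro j hj
    have : c i0 ≤ ∑ i ∈ Finset.Iic j, c i :=
      Finset.single_le_sum (fun i _ => hc i) (Finset.mem_Iic.mpr hj)
    have : 0 < c i0 := lt_of_le_of_ne (hc i0) (Ne.symm hi0)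
    linarith [Finset.single_le_sum (fun i _ => hc i) (Finset.mem_Iic.mpr hj)]
  have hm0 : 0 ≤ m := by
    rw [hm]
    apply Finset.le_inf'
    intro j hj
    exact div_nonneg (Finset.sum_nonneg fun i _ => hb i) (hCpos j (Finset.mem_Ici.mp hj)).le
  -- key: partial sums of b - m*c are nonnegative
  have hS : ∀ j : Fin n, m * ∑ i ∈ Finset.Iic j, c i ≤ ∑ i ∈ Finset.Iic j, b i := by
    intro j
    by_cases hj : i0 ≤ j
    · have hle : m ≤ (∑ i ∈ Finset.Iic j, b i) / (∑ i ∈ Finset.Iic j, c i) :=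
        Finset.inf'_le _ (Finset.mem_Ici.mpr hj)
      exact (le_div_iff₀ (hCpos j hj)).mp hle
    · have hc0 : ∀ i ∈ Finset.Iic j, c i = 0 := by
        intro i hi
        by_contra h
        exact hj (le_trans (hi0min i h) (Finset.mem_Iic.mp hi))
      rw [Finset.sum_eq_zero hc0]
      simpa using Finset.sum_nonneg fun i (_ : i ∈ Finset.Iic j) => hb i
  -- pass to ℕ and use Abel summation
  set L : ℕ → ℝ := ext' (fun i => Real.log (Δ i)) with hL
  set A : ℕ → ℝ := ext' (fun i => b i - m * c i) with hA
  have hL0 : ∀ k, 0 ≤ L k := by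
    intro k
    rw [hL, ext']
    split
    · exact Real.log_nonneg (hΔ1 _)
    · exact le_rfl
  have hLmono : ∀ k l : ℕ, k ≤ l → L l ≤ L k := by
    intro k l hkl
    rw [hL]; simp only [ext']
    split
    · next hln =>
      rw [dif_pos (lt_of_le_of_lt hkl hln)]
      exact Real.log_le_log (lt_of_lt_of_le one_pos (hΔ1 _)) (hΔmono _ _ hkl)
    · exact hL0 k
  -- partial sums of A are nonneg
  have hSA : ∀ k, 0 ≤ ∑ i ∈ Finset.range k, A i := by
    intro k
    rcases Nat.eq_zero_or_pos k with rfl | hk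
    · simp
    by_cases hkn : k ≤ n
    · have hjlt : k - 1 < n := by omega
      set j : Fin n := ⟨k - 1, hjlt⟩ with hj
      have hk1 : j.val + 1 = k := by simp [hj]; omega
      have := hS j
      have hb' := sum_Iic_ext b j
      have hc' := sum_Iic_ext c j
      have hsum : ∑ i ∈ Finset.Iic j, (b i - m * c i) = ∑ i ∈ Finset.range k, A i := by
        rw [hA, sum_Iic_ext (fun i => b i - m * c i) j, hk1]
      rw [← hsum, Finset.sum_sub_distrib, ← Finset.mul_sum]
      linarith
    · -- k > n : A i = 0 for i ≥ n, reduce to k = n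
      have heq : ∑ i ∈ Finset.range k, A i = ∑ i ∈ Finset.range n, A i := by
        have hz : ∑ i ∈ Finset.Ico n k, A i = 0 := by
          apply Finset.sum_eq_zero
          intro i hi
          rw [hA]
          exact dif_neg (Nat.not_lt.mpr (Finset.mem_Ico.mp hi).1)
        rw [← Finset.sum_range_add_sum_Ico A (le_of_not_ge hkn), hz, add_zero]
      rw [heq]
      rcases Nat.eq_zero_or_pos n with rfl | hn
      · simp
      have hjlt : n - 1 < n := by omega
      set j : Fin n := ⟨n - 1, hjlt⟩ with hj
      have hk1 : j.val + 1 = n := by simp [hj]; omega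
      have := hS j
      have hsum : ∑ i ∈ Finset.Iic j, (b i - m * c i) = ∑ i ∈ Finset.range n, A i := by
        rw [hA, sum_Iic_ext (fun i => b i - m * c i) j, hk1]
      rw [← hsum, Finset.sum_sub_distrib, ← Finset.mul_sum]
      linarith
  -- now main inequality
  have key : 0 ≤ ∑ i ∈ Finset.range n, L i * A i := by
    have habel := Finset.sum_range_by_parts L A n
    simp only [smul_eq_mul] at habel
    rw [habel]
    have h1 : 0 ≤ L (n - 1) * ∑ i ∈ Finset.range n, A i :=
      mul_nonneg (hL0 _) (hSA n)
    have h2 : ∑ i ∈ Finset.range (n - 1), (L (i + 1) - L i) * ∑ j ∈ Finset.range (i + 1), A j ≤ 0 := by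
      apply Finset.sum_nonpos
      intro i _
      apply mul_nonpos_of_nonpos_of_nonneg
      · linarith [hLmono i (i + 1) (Nat.le_succ i)]
      · exact hSA (i + 1)
    linarith
  have hexp : ∑ i ∈ Finset.range n, L i * A i =
      (∑ i, b i * Real.log (Δ i)) - m * ∑ i, c i * Real.log (Δ i) := by
    have : ∀ k ∈ Finset.range n, L k * A k =
        ext' (fun i => b i * Real.log (Δ i) - m * (c i * Real.log (Δ i))) k := by
      intro k hk
      rw [hL, hA, ext', ext', ext']
      rw [dif_pos (Finset.mem_range.mp hk), dif_pos (Finset.mem_range.mp hk),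
        dif_pos (Finset.mem_range.mp hk)]
      ring
    rw [Finset.sum_congr rfl this, ← sum_univ_ext, Finset.sum_sub_distrib, ← Finset.mul_sum]
  rw [hexp] at key
  linarith
end

section
/- Let Δ_1 ≥ Δ_2 ≥ … ≥ Δ_n ≥ 1 be real numbers and b_1,…,b_n, c_1,…,c_n be nonnegative real numbers with b_1 ≠ 0. Then (max_{1 ≤ j ≤ n} (∑_{i=1}^j c_i)/(∑_{i=1}^j b_i)) · ∑_{i=1}^n b_i·log Δ_i ≥ ∑_{i=1}^n c_i·log Δ_i. -/
open Finset

private lemma abel_aux (f C : ℕ → ℝ) :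
    ∀ n : ℕ, ∑ i ∈ Finset.range n, (C (i + 1) - C i) * f i =
      (∑ j ∈ Finset.range n, C (j + 1) * (f j - f (j + 1))) + C n * f n - C 0 * f 0 := by
  intro n
  induction n with
  | zero => simp
  | succ m ih =>
    rw [Finset.sum_range_succ, Finset.sum_range_succ, ih]
    ring

/-- Corollary of the weighted filtration inequality: if `Δ₁ ≥ … ≥ Δₙ ≥ 1`, `b, c ≥ 0`
and `b₁ ≠ 0`, then
`(max_{1 ≤ j ≤ n} (∑_{i ≤ j} cᵢ)/(∑_{i ≤ j} bᵢ)) · ∑ bᵢ log Δᵢ ≥ ∑ cᵢ log Δᵢ`. -/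
theorem weighted_filtration_corollary {n : ℕ} (hn : 0 < n) (Δ b c : Fin n → ℝ)
    (hΔ1 : ∀ i, 1 ≤ Δ i) (hΔmono : ∀ i j : Fin n, i ≤ j → Δ j ≤ Δ i)
    (hb : ∀ i, 0 ≤ b i) (hc : ∀ i, 0 ≤ c i)
    (hb1 : b ⟨0, hn⟩ ≠ 0) :
    (Finset.univ.sup' ⟨⟨0, hn⟩, Finset.mem_univ _⟩
        (fun j : Fin n => (∑ i ∈ Finset.Iic j, c i) / (∑ i ∈ Finset.Iic j, b i))) *
      ∑ i, b i * Real.log (Δ i) ≥ ∑ i, c i * Real.log (Δ i) := by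
  classical
  set M := (Finset.univ.sup' ⟨⟨0, hn⟩, Finset.mem_univ _⟩
        (fun j : Fin n => (∑ i ∈ Finset.Iic j, c i) / (∑ i ∈ Finset.Iic j, b i))) with hM
  set f' : ℕ → ℝ := fun k => if h : k < n then Real.log (Δ ⟨k, h⟩) else 0 with hf'
  set b' : ℕ → ℝ := fun k => if h : k < n then b ⟨k, h⟩ else 0 with hb'
  set c' : ℕ → ℝ := fun k => if h : k < n then c ⟨k, h⟩ else 0 with hc'
  -- sums over Fin-Iic equal sums over range
  have hIic : ∀ (g : Fin n → ℝ) (g' : ℕ → ℝ), (∀ k (h : k < n), g' k = g ⟨k, h⟩) →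
      ∀ j : Fin n, ∑ i ∈ Finset.Iic j, g i = ∑ i ∈ Finset.range (j.val + 1), g' i := by
    intro g g' hgg' j
    have h1 : ∑ i ∈ Finset.Iic (j.val), g' i = ∑ i ∈ Finset.range (j.val + 1), g' i := by
      congr 1
      ext x
      simp [Nat.lt_succ_iff]
    rw [← h1, ← Fin.map_valEmbedding_Iic, Finset.sum_map]
    refine Finset.sum_congr rfl fun i _ => ?_
    exact (hgg' i.val i.isLt).symm
  -- partial sums of b are positive
  have hBpos : ∀ j : Fin n, 0 < ∑ i ∈ Finset.range (j.val + 1), b' i := by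
    intro j
    have h0 : (0:ℕ) ∈ Finset.range (j.val + 1) := Finset.mem_range.2 (Nat.succ_pos _)
    have : 0 < b' 0 := by
      simp only [hb', dif_pos hn]
      exact lt_of_le_of_ne (hb _) (Ne.symm hb1)
    refine lt_of_lt_of_le this (Finset.single_le_sum (fun i _ => ?_) h0)
    simp only [hb']
    split <;> [exact hb _; exact le_refl 0]
  -- M bounds the partial-sum ratios
  have hCB : ∀ k : ℕ, k < n → ∑ i ∈ Finset.range (k + 1), c' i ≤
      M * ∑ i ∈ Finset.range (k + 1), b' i := by
    intro k hk
    have hle := Finset.le_sup' (f := fun j : Fin n =>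
      (∑ i ∈ Finset.Iic j, c i) / (∑ i ∈ Finset.Iic j, b i))
      (Finset.mem_univ (⟨k, hk⟩ : Fin n))
    rw [hIic c c' (fun k h => dif_pos h) ⟨k, hk⟩, hIic b b' (fun k h => dif_pos h) ⟨k, hk⟩]
      at hle
    have hpos := hBpos ⟨k, hk⟩
    rw [div_le_iff₀ hpos] at hle
    simpa [mul_comm] using hle
  have hM0 : 0 ≤ M := by
    have := hCB 0 hn
    have hc0 : 0 ≤ ∑ i ∈ Finset.range 1, c' i := by
      refine Finset.sum_nonneg fun i _ => ?_
      simp only [hc']; split <;> [exact hc _; exact le_refl 0]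
    nlinarith [hBpos ⟨0, hn⟩]
  -- convert the goal to range sums
  have hconv : ∀ (g : Fin n → ℝ) (g' : ℕ → ℝ), (∀ k (h : k < n), g' k = g ⟨k, h⟩) →
      ∑ i : Fin n, g i * Real.log (Δ i) = ∑ i ∈ Finset.range n, g' i * f' i := by
    intro g g' hgg'
    rw [← Fin.sum_univ_eq_sum_range (fun i => g' i * f' i) n]
    refine Finset.sum_congr rfl fun i _ => ?_
    simp only [hf', dif_pos i.isLt, hgg' i.val i.isLt, Fin.eta]
  rw [ge_iff_le, hconv c c' (fun k h => dif_pos h), hconv b b' (fun k h => dif_pos h)]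
  -- Abel summation
  set C : ℕ → ℝ := fun k => ∑ i ∈ Finset.range k, c' i with hC
  set B : ℕ → ℝ := fun k => ∑ i ∈ Finset.range k, b' i with hB
  have hCd : ∀ i, c' i = C (i + 1) - C i := by
    intro i; simp [hC, Finset.sum_range_succ]
  have hBd : ∀ i, b' i = B (i + 1) - B i := by
    intro i; simp [hB, Finset.sum_range_succ]
  have habC : ∑ i ∈ Finset.range n, c' i * f' i =
      ∑ j ∈ Finset.range n, C (j + 1) * (f' j - f' (j + 1)) := by
    have := abel_aux f' C n
    have hfn : f' n = 0 := by simp [hf']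
    have hC0 : C 0 = 0 := by simp [hC]
    calc ∑ i ∈ Finset.range n, c' i * f' i
        = ∑ i ∈ Finset.range n, (C (i + 1) - C i) * f' i :=
          Finset.sum_congr rfl fun i _ => by rw [← hCd]
      _ = _ := by rw [this, hfn, hC0]; ring
  have habB : ∑ i ∈ Finset.range n, b' i * f' i =
      ∑ j ∈ Finset.range n, B (j + 1) * (f' j - f' (j + 1)) := by
    have := abel_aux f' B n
    have hfn : f' n = 0 := by simp [hf']
    have hB0 : B 0 = 0 := by simp [hB]
    calc ∑ i ∈ Finset.range n, b' i * f' i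
        = ∑ i ∈ Finset.range n, (B (i + 1) - B i) * f' i :=
          Finset.sum_congr rfl fun i _ => by rw [← hBd]
      _ = _ := by rw [this, hfn, hB0]; ring
  have hg : ∀ j, j < n → 0 ≤ f' j - f' (j + 1) := by
    intro j hj
    by_cases h1 : j + 1 < n
    · simp only [hf', dif_pos hj, dif_pos h1, sub_nonneg]
      exact Real.log_le_log (lt_of_lt_of_le one_pos (hΔ1 _))
        (hΔmono ⟨j, hj⟩ ⟨j + 1, h1⟩ (by simp [Fin.le_def]))
    · simp only [hf', dif_pos hj, dif_neg h1, sub_zero]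
      exact Real.log_nonneg (hΔ1 _)
  rw [habC, habB, Finset.mul_sum]
  refine Finset.sum_le_sum fun j hj => ?_
  have hjn := Finset.mem_range.1 hj
  have := hCB j hjn
  calc C (j + 1) * (f' j - f' (j + 1))
      ≤ (M * B (j + 1)) * (f' j - f' (j + 1)) :=
        mul_le_mul_of_nonneg_right this (hg j hjn)
    _ = M * (B (j + 1) * (f' j - f' (j + 1))) := by ring
end

section
/- Let (C, a) ∈ K_x with a(α) ≠ 0 for all but finitely many α ∈ C, and let v be a place of k. Then the function α ↦ 1/‖a(α)‖_v (defined where a(α) ≠ 0) belongs to C_x. -/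
open NumberField IsDedekindDomain Real
open scoped NNReal

variable (k : Type*) [Field k] [NumberField k]

/-- The normalized absolute value `‖x‖_v` attached to a finite place `v` of `k`:
`N(𝔭)^{-ord_v(x)/[k:ℚ]}`, i.e. `|x|_v^{n_v}` in the usual normalization
(`|p|_v = p⁻¹` and `n_v = [k_v : ℚ_v]/[k : ℚ]`). -/
noncomputable def finNorm (v : HeightOneSpectrum (𝓞 k)) (x : k) : ℝ :=
  ((WithZeroMulInt.toNNReal
      (show ((Ideal.absNorm v.asIdeal : ℝ≥0)) ≠ 0 by
        have : Ideal.absNorm v.asIdeal ≠ 0 := by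
          simpa [Ideal.absNorm_eq_zero_iff] using v.ne_bot
        exact_mod_cast this)
    (v.valuation k x) : ℝ)) ^ ((Module.finrank ℚ k : ℝ)⁻¹)

/-- The normalized absolute value `‖x‖_w = |σ_w x|^{n_w}` attached to an
infinite place `w` of `k`, where `n_w = mult(w)/[k:ℚ]` is the normalized local degree. -/
noncomputable def infNorm (w : InfinitePlace k) (x : k) : ℝ :=
  (w x) ^ ((w.mult : ℝ) / (Module.finrank ℚ k : ℝ))
/-- `log⁺ t = log max {1, t}`. -/
noncomputable def logPlus (t : ℝ) : ℝ := Real.log (max 1 t)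

/-- The absolute logarithmic height of a field element:
`h(x) = ∑_v log⁺ ‖x‖_v`, the sum being over all places of `k`. -/
noncomputable def elemHeight (x : k) : ℝ :=
  (∑ w : InfinitePlace k, logPlus (infNorm k w x)) +
    (∑ᶠ v : HeightOneSpectrum (𝓞 k), logPlus (finNorm k v x))

/-- The absolute logarithmic height of a point of `ℙ^M(k)` given by homogeneous
coordinates: `h(x) = ∑_v log max_i ‖x_i‖_v`. -/
noncomputable def projHeight {M : ℕ} (x : Fin (M + 1) → k) : ℝ :=
  (∑ w : InfinitePlace k,
      Real.log (Finset.univ.sup' Finset.univ_nonempty fun i => infNorm k w (x i))) +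
    (∑ᶠ v : HeightOneSpectrum (𝓞 k),
      Real.log (Finset.univ.sup' Finset.univ_nonempty fun i => finNorm k v (x i)))

/-- A map `a : C → k`, defined on a cofinite subset `C ⊆ Λ`, is *small* with respect
to the sequence of points `x : Λ → ℙ^M(k)` if `h(a(α)) = o(h(x(α)))`: for every
`ε > 0` there is a cofinite subset `Cε ⊆ C` on which `h(a(α)) ≤ ε · h(x(α))`. -/
def IsSmallMap {Λ : Type*} {M : ℕ} (x : Λ → (Fin (M + 1) → k))
    (C : Set Λ) (a : Λ → k) : Prop :=
  Cᶜ.Finite ∧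
    ∀ ε > (0 : ℝ), ∃ Cε ⊆ C, Cεᶜ.Finite ∧
      ∀ α ∈ Cε, elemHeight k (a α) ≤ ε * projHeight k (x α)
/-!
Up to the factor `[k : ℚ]⁻¹`, `elemHeight` is `Height.logHeight₁`, which by the product
formula is invariant under `b ↦ b⁻¹`. Hence `log⁺ (1 / ‖b‖_v) = log⁺ ‖b⁻¹‖_v ≤ h(b⁻¹) = h(b)` at
every place `v`, and the bound `h(a(α)) ≤ ε h(x(α))` passes to `log⁺ (1 / ‖a(α)‖_v)`.
-/

lemma Real.posLog_rpow {x : ℝ} (hx : 0 ≤ x) {r : ℝ} (hr : 0 ≤ r) :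
    log⁺ (x ^ r) = r * log⁺ x := by
  rcases hx.eq_or_lt with rfl | hx
  · rcases hr.eq_or_lt with rfl | hr
    · simp
    · simp [Real.zero_rpow hr.ne']
  · simp only [Real.posLog_apply, Real.log_rpow hx, mul_max_of_nonneg _ _ hr, mul_zero]

section
variable {k}

lemma logPlus_eq_posLog {t : ℝ} (ht : 0 ≤ t) : logPlus t = log⁺ t :=
  (Real.posLog_eq_log_max_one ht).symm

lemma finNorm_eq_rpow (v : HeightOneSpectrum (𝓞 k)) (x : k) :
    finNorm k v x = FinitePlace.mk v x ^ (Module.finrank ℚ k : ℝ)⁻¹ := by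
  rw [FinitePlace.mk_apply, FinitePlace.norm_embedding']
  rfl

lemma infNorm_inv (w : InfinitePlace k) (x : k) : infNorm k w x⁻¹ = (infNorm k w x)⁻¹ := by
  rw [infNorm, infNorm, map_inv₀, Real.inv_rpow (by positivity)]

lemma finNorm_inv (v : HeightOneSpectrum (𝓞 k)) (x : k) :
    finNorm k v x⁻¹ = (finNorm k v x)⁻¹ := by
  rw [finNorm_eq_rpow, finNorm_eq_rpow, map_inv₀, Real.inv_rpow (by positivity)]

lemma logPlus_infNorm (w : InfinitePlace k) (x : k) :
    logPlus (infNorm k w x) = (Module.finrank ℚ k : ℝ)⁻¹ * (w.mult * log⁺ (w x)) := by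
  rw [infNorm, logPlus_eq_posLog (by positivity), Real.posLog_rpow (by positivity) (by positivity)]
  ring

lemma logPlus_finNorm (v : HeightOneSpectrum (𝓞 k)) (x : k) :
    logPlus (finNorm k v x) = (Module.finrank ℚ k : ℝ)⁻¹ * log⁺ (FinitePlace.mk v x) := by
  rw [finNorm_eq_rpow, logPlus_eq_posLog (by positivity),
    Real.posLog_rpow (by positivity) (by positivity)]

lemma elemHeight_eq_logHeight₁ (x : k) :
    elemHeight k x = (Module.finrank ℚ k : ℝ)⁻¹ * Height.logHeight₁ x := by
  have hfin : ∑ᶠ v : HeightOneSpectrum (𝓞 k), log⁺ (FinitePlace.mk v x) =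
      ∑ᶠ w : FinitePlace k, log⁺ (w x) :=
    finsum_comp_equiv FinitePlace.equivHeightOneSpectrum.symm (f := fun w => log⁺ (w x))
  simp only [elemHeight, logPlus_infNorm, logPlus_finNorm, ← Finset.mul_sum, ← mul_finsum,
    hfin, NumberField.logHeight₁_eq, mul_add]

lemma elemHeight_inv (x : k) : elemHeight k x⁻¹ = elemHeight k x := by
  rw [elemHeight_eq_logHeight₁, elemHeight_eq_logHeight₁, Height.logHeight₁_inv]

lemma logPlus_infNorm_le_elemHeight (w : InfinitePlace k) (x : k) :
    logPlus (infNorm k w x) ≤ elemHeight k x := by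
  rw [logPlus_infNorm, elemHeight_eq_logHeight₁, NumberField.logHeight₁_eq]
  gcongr
  refine le_add_of_le_of_nonneg ?_ (finsum_nonneg fun _ => Real.posLog_nonneg)
  exact Finset.single_le_sum (f := fun w : InfinitePlace k => (w.mult : ℝ) * log⁺ (w x))
    (fun _ _ => mul_nonneg (Nat.cast_nonneg _) Real.posLog_nonneg) (Finset.mem_univ w)

lemma logPlus_finNorm_le_elemHeight (v : HeightOneSpectrum (𝓞 k)) {x : k} (hx : x ≠ 0) :
    logPlus (finNorm k v x) ≤ elemHeight k x := by
  have hsupp : (fun w : FinitePlace k => log⁺ (w x)).HasFiniteSupport :=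
    (FinitePlace.hasFiniteMulSupport hx).subset fun w hw h1 => hw (by simp [h1])
  rw [logPlus_finNorm, elemHeight_eq_logHeight₁, NumberField.logHeight₁_eq]
  gcongr
  refine le_add_of_nonneg_of_le
    (Finset.sum_nonneg fun _ _ => mul_nonneg (Nat.cast_nonneg _) Real.posLog_nonneg) ?_
  exact single_le_finsum (FinitePlace.mk v) hsupp fun _ => Real.posLog_nonneg

lemma logPlus_inv_infNorm_le_elemHeight (w : InfinitePlace k) (x : k) :
    logPlus (infNorm k w x)⁻¹ ≤ elemHeight k x := by
  rw [← infNorm_inv, ← elemHeight_inv x]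
  exact logPlus_infNorm_le_elemHeight w x⁻¹

lemma logPlus_inv_finNorm_le_elemHeight (v : HeightOneSpectrum (𝓞 k)) {x : k} (hx : x ≠ 0) :
    logPlus (finNorm k v x)⁻¹ ≤ elemHeight k x := by
  rw [← finNorm_inv, ← elemHeight_inv x]
  exact logPlus_finNorm_le_elemHeight v (inv_ne_zero hx)

lemma IsSmallMap.exists_cofinite_le_of_le_elemHeight {Λ : Type*} {M : ℕ}
    {x : Λ → (Fin (M + 1) → k)} {C : Set Λ} {a : Λ → k} (h : IsSmallMap k x C a)
    (ha : {α ∈ C | a α = 0}.Finite) {g : k → ℝ} (hg : ∀ b, b ≠ 0 → g b ≤ elemHeight k b)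
    {ε : ℝ} (hε : 0 < ε) :
    ∃ Cε ⊆ C \ {α : Λ | a α = 0}, Cεᶜ.Finite ∧ ∀ α ∈ Cε, g (a α) ≤ ε * projHeight k (x α) := by
  obtain ⟨Cε, hCε, hfin, hbound⟩ := h.2 ε hε
  refine ⟨Cε \ {α | a α = 0}, Set.sdiff_subset_sdiff_left hCε, ?_, fun α hα => ?_⟩
  · refine (hfin.union ha).subset fun α hα => ?_
    by_cases hαCε : α ∈ Cε
    · exact Or.inr ⟨hCε hαCε, not_not.mp fun hα0 => hα ⟨hαCε, hα0⟩⟩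
    · exact Or.inl hαCε
  · exact (hg _ hα.2).trans (hbound α hα.1)

end

/-- If `(C, a) ∈ K_x` is a small map with `a(α) ≠ 0` for all but finitely many
`α ∈ C`, and `v` is any place of `k` (infinite or finite), then the function
`α ↦ 1/‖a(α)‖_v`, defined where `a(α) ≠ 0`, belongs to `C_x`:
`log⁺ (1/‖a(α)‖_v) = o(h(x(α)))` on the cofinite set `C \ {α : a(α) = 0}`. -/
theorem isSmallMap_inv_norm_ctrl {Λ : Type*} {M : ℕ} (x : Λ → (Fin (M + 1) → k))
    (C : Set Λ) (a : Λ → k) (h : IsSmallMap k x C a)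
    (ha : {α ∈ C | a α = 0}.Finite) :
    (∀ w : InfinitePlace k, ∀ ε > (0 : ℝ),
        ∃ Cε ⊆ C \ {α : Λ | a α = 0}, Cεᶜ.Finite ∧
          ∀ α ∈ Cε, logPlus ((infNorm k w (a α))⁻¹) ≤ ε * projHeight k (x α)) ∧
      (∀ v : HeightOneSpectrum (𝓞 k), ∀ ε > (0 : ℝ),
        ∃ Cε ⊆ C \ {α : Λ | a α = 0}, Cεᶜ.Finite ∧
          ∀ α ∈ Cε, logPlus ((finNorm k v (a α))⁻¹) ≤ ε * projHeight k (x α)) :=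
  ⟨fun w _ hε => h.exists_cofinite_le_of_le_elemHeight ha
      (fun b _ => logPlus_inv_infNorm_le_elemHeight w b) hε,
    fun v _ hε => h.exists_cofinite_le_of_le_elemHeight ha
      (fun _ hb => logPlus_inv_finNorm_le_elemHeight v hb) hε⟩
end

section
/- Let λ_1 ≥ λ_2 ≥ … ≥ λ_q ≥ 0 and let W_1 ⊇ W_2 ⊇ … ⊇ W_q be a decreasing chain of closed subsets of an n-dimensional variety V with codim W_j ≥ b_j for nondecreasing integers 0 = b_0 ≤ b_1 ≤ … ≤ b_q ≤ n, and suppose b_1 ≥ 1. Given nonnegative weights c_1,…,c_q with (c_1+…+c_j)/b_j ≤ M for all j with b_j > 0, then ∑_{j : b_j ≤ n} c_j λ_j ≤ M · ∑_{j=1}^q (b_j − b_{j−1}) λ_j, and moreover ∑_{j=1}^q (b_j − b_{j−1}) = b_q ≤ n. -/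
open Finset

/-- Key combinatorial step in the proof of the weighted main theorem:
`λ₁ ≥ … ≥ λ_q ≥ 0` are the sorted Weil function values (here `lam j` is `λ_{j+1}`),
`b_j` is the truncated codimension sequence (`0 = b 0 ≤ b 1 ≤ … ≤ b q ≤ n`, `1 ≤ b 1`),
`c` are nonnegative weights with all partial-sum ratios `(c₁+…+c_j)/b_j ≤ M`.
Then `∑ c_j λ_j ≤ M · ∑ (b_j − b_{j−1}) λ_j` and `∑ (b_j − b_{j−1}) = b_q ≤ n`. -/
theorem truncated_codim_filtration (n q : ℕ) (hq : 0 < q)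
    (lam c : ℕ → ℝ) (b : ℕ → ℕ) (M : ℝ)
    (hlam0 : ∀ j, 0 ≤ lam j)
    (hlam : ∀ i j, i ≤ j → lam j ≤ lam i)
    (hc : ∀ j, 0 ≤ c j)
    (hb0 : b 0 = 0) (hbmono : Monotone b) (hbn : ∀ j ≤ q, b j ≤ n) (hb1 : 1 ≤ b 1)
    (hM : ∀ j, 1 ≤ j → j ≤ q → (∑ s ∈ Finset.range j, c s) / (b j : ℝ) ≤ M) :
    (∑ j ∈ Finset.range q, c j * lam j ≤
        M * ∑ j ∈ Finset.range q, ((b (j + 1) : ℝ) - (b j : ℝ)) * lam j) ∧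
      (∑ j ∈ Finset.range q, (b (j + 1) - b j) = b q ∧ b q ≤ n) := by
  -- telescoping sum in ℕ
  have htel : ∀ k, ∑ j ∈ Finset.range k, (b (j + 1) - b j) = b k := by
    intro k
    induction k with
    | zero => simp [hb0]
    | succ k ih =>
      rw [Finset.sum_range_succ, ih]
      have := hbmono (Nat.le_succ k)
      simp only [Nat.succ_eq_add_one] at this
      omega
  -- partial sums bounded by M * b j
  have hS : ∀ j, 1 ≤ j → j ≤ q → (∑ s ∈ Finset.range j, c s) ≤ M * (b j : ℝ) := by
    intro j h1 h2
    have hbj : 1 ≤ b j := le_trans hb1 (hbmono h1)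
    have hbpos : (0 : ℝ) < (b j : ℝ) := by exact_mod_cast hbj
    have := hM j h1 h2
    calc (∑ s ∈ Finset.range j, c s) = (∑ s ∈ Finset.range j, c s) / (b j : ℝ) * (b j : ℝ) := by
          field_simp
      _ ≤ M * (b j : ℝ) := by
          exact mul_le_mul_of_nonneg_right this hbpos.le
  -- key Abel-summation inequality with slack term, by induction
  have key : ∀ k, 1 ≤ k → k ≤ q →
      ∑ j ∈ Finset.range k, c j * lam j
        + (M * (b k : ℝ) - ∑ s ∈ Finset.range k, c s) * lam (k - 1)
      ≤ M * ∑ j ∈ Finset.range k, ((b (j + 1) : ℝ) - (b j : ℝ)) * lam j := by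
    intro k hk
    induction k, hk using Nat.le_induction with
    | base =>
      intro _
      simp [Finset.sum_range_one, hb0]
      ring_nf
      nlinarith [hlam0 0]
    | succ k hk ih =>
      intro hkq
      have ih' := ih (le_trans (Nat.le_succ k) hkq)
      have h1 : (∑ s ∈ Finset.range k, c s) ≤ M * (b k : ℝ) := hS k hk (by omega)
      have h2 : lam k ≤ lam (k - 1) := hlam (k - 1) k (Nat.sub_le k 1)
      rw [Finset.sum_range_succ, Finset.sum_range_succ, Finset.sum_range_succ
          (fun j => ((b (j + 1) : ℝ) - (b j : ℝ)) * lam j)]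
      have hk1 : k + 1 - 1 = k := by omega
      rw [hk1, mul_add]
      nlinarith [mul_nonneg (sub_nonneg.2 h1) (sub_nonneg.2 h2)]
  have hq1 : 1 ≤ q := hq
  have hkey := key q hq1 le_rfl
  have hslack : 0 ≤ (M * (b q : ℝ) - ∑ s ∈ Finset.range q, c s) * lam (q - 1) :=
    mul_nonneg (sub_nonneg.2 (hS q hq1 le_rfl)) (hlam0 _)
  refine ⟨by linarith, htel q, hbn q le_rfl⟩
end
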